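/- For every n ≥ 1, setting c(n) = ⌊(n+1)φ⌋, one has A(n,i) = i for all i ≥ c(n), and A(n, c(n)−1) ≠ c(n)−1; that is, c(n) = ⌊(n+1)φ⌋ is the first column of the final fixed segment of row n of the Hurt-Sada array. -/
import Mathlib


/-- The golden ratio `(1 + √5)/2`. -/
noncomputable def phi : ℝ := (1 + Real.sqrt 5) / 2

/-- The Hurt-Sada array `A : ℕ → ℕ → ℕ`.  Row `0` is the identity sequence;
row `n+1` is obtained from row `n` by moving the entry `n+1` (located at the unique
position `p` with `A n p = n+1`) by `n+1` places to the right, shifting the jumped-over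
entries one place left. -/
noncomputable def A : ℕ → ℕ → ℕ
  | 0, k => k
  | n + 1, j =>
    let p := sInf {i | A n i = n + 1}
    if j < p then A n j
    else if j < p + (n + 1) then A n (j + 1)
    else if j = p + (n + 1) then n + 1
    else A n j

lemma A_zero (k : ℕ) : A 0 k = k := by rw [A]

lemma A_succ (n j : ℕ) : A (n+1) j =
    (if j < sInf {i | A n i = n + 1} then A n j
    else if j < sInf {i | A n i = n + 1} + (n + 1) then A n (j + 1)
    else if j = sInf {i | A n i = n + 1} + (n + 1) then n + 1
    else A n j) := by rw [A]

lemma sqrt5_sq : Real.sqrt 5 ^ 2 = 5 := Real.sq_sqrt (by norm_num)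

lemma sqrt5_gt : 2 < Real.sqrt 5 := by
  nlinarith [sqrt5_sq, Real.sqrt_nonneg 5]

lemma sqrt5_lt : Real.sqrt 5 < 3 := by
  nlinarith [sqrt5_sq, Real.sqrt_nonneg 5]

lemma one_lt_phi : 1 < phi := by unfold phi; nlinarith [sqrt5_gt]

lemma phi_pos : (0 : ℝ) < phi := lt_trans one_pos one_lt_phi

lemma phi_lt_two : phi < 2 := by unfold phi; nlinarith [sqrt5_lt]

lemma phi_id : phi * (phi - 1) = 1 := by unfold phi; nlinarith [sqrt5_sq]

lemma irr_phi : Irrational phi := by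
  have h5 : Irrational (Real.sqrt 5) := by
    have := Nat.Prime.irrational_sqrt (p := 5) (by norm_num)
    simpa using this
  rintro ⟨q, hq⟩
  exact h5 ⟨2 * q - 1, by push_cast; rw [hq]; unfold phi; ring⟩

lemma phi_mul_ne (k m : ℕ) (hk : 1 ≤ k) : (k : ℝ) * phi ≠ (m : ℝ) := by
  intro h
  apply irr_phi
  have hk' : (k : ℝ) ≠ 0 := Nat.cast_ne_zero.mpr (by omega)
  refine ⟨(m : ℚ) / (k : ℚ), ?_⟩
  have hkq : ((k : ℚ) : ℝ) ≠ 0 := by push_cast; exact hk'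
  push_cast
  field_simp
  linarith [h]

/-- `B k = ⌊k φ⌋`. -/
noncomputable def B (k : ℕ) : ℕ := ⌊(k : ℝ) * phi⌋₊

lemma B_one : B 1 = 1 := by
  unfold B
  rw [Nat.cast_one, one_mul]
  rw [Nat.floor_eq_iff phi_pos.le]
  constructor
  · push_cast; linarith [one_lt_phi]
  · push_cast; linarith [phi_lt_two]

lemma le_B (k : ℕ) : k ≤ B k := by
  apply Nat.le_floor
  have h : (0:ℝ) ≤ (k:ℝ) * (phi - 1) :=
    mul_nonneg (Nat.cast_nonneg k) (by linarith [one_lt_phi])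
  nlinarith [h]

lemma B_mono {a b : ℕ} (h : a < b) : B a < B b := by
  have hb : (a : ℝ) + 1 ≤ (b : ℝ) := by exact_mod_cast h
  have h1 : (B a : ℝ) ≤ (a : ℝ) * phi :=
    Nat.floor_le (mul_nonneg (Nat.cast_nonneg a) phi_pos.le)
  have h2 : ((B a + 1 : ℕ) : ℝ) ≤ (b : ℝ) * phi := by
    push_cast
    nlinarith [one_lt_phi]
  have h3 : B a + 1 ≤ B b := Nat.le_floor h2
  omega

/-- The key Beatty-type equivalence. -/
lemma B_key {k m : ℕ} (hk : 1 ≤ k) : m + 1 + k ≤ B (m + 1) ↔ B k ≤ m := by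
  have h1 : (1 : ℝ) < phi := one_lt_phi
  have hid : phi * (phi - 1) = 1 := phi_id
  constructor
  · intro h
    have h2 : ((m + 1 + k : ℕ) : ℝ) ≤ ((m + 1 : ℕ) : ℝ) * phi := by
      calc ((m + 1 + k : ℕ) : ℝ) ≤ (B (m + 1) : ℝ) := by exact_mod_cast h
        _ ≤ _ := Nat.floor_le (mul_nonneg (Nat.cast_nonneg _) phi_pos.le)
    have h2' : (k : ℝ) ≤ ((m : ℝ) + 1) * (phi - 1) := by push_cast at h2; nlinarith
    have h3 : (k : ℝ) * phi ≤ ((m : ℝ) + 1) * (phi - 1) * phi :=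
      mul_le_mul_of_nonneg_right h2' (by linarith)
    have hx : ((m : ℝ) + 1) * (phi - 1) * phi = (m : ℝ) + 1 := by
      rw [mul_assoc, mul_comm (phi - 1) phi, hid, mul_one]
    rw [hx] at h3
    have h4 : (k : ℝ) * phi < (m : ℝ) + 1 := by
      rcases lt_or_eq_of_le h3 with h | h
      · exact h
      · exact absurd (h.trans (by push_cast; ring)) (phi_mul_ne k (m + 1) hk)
    have h5 : B k < m + 1 := by
      apply (Nat.floor_lt (mul_nonneg (Nat.cast_nonneg _) phi_pos.le)).mpr
      push_cast
      exact h4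
    omega
  · intro h
    have h3 : (B k : ℝ) ≤ (m : ℝ) := by exact_mod_cast h
    have h4 : (k : ℝ) * phi < (m : ℝ) + 1 := by
      have h6 := Nat.lt_floor_add_one ((k : ℝ) * phi)
      have hBk : (⌊(k : ℝ) * phi⌋₊ : ℝ) = (B k : ℝ) := rfl
      linarith [h6]
    apply Nat.le_floor
    have h5 : (k : ℝ) * phi * (phi - 1) ≤ ((m : ℝ) + 1) * (phi - 1) :=
      mul_le_mul_of_nonneg_right h4.le (by linarith)
    have hx : (k : ℝ) * phi * (phi - 1) = (k : ℝ) := by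
      rw [mul_assoc, hid, mul_one]
    rw [hx] at h5
    push_cast
    nlinarith

/-- Position of `m` in row `n`, valid for `m > n`. -/
noncomputable def pos (n m : ℕ) : ℕ := min m (B (m + 1) - n - 2)

/-- The full invariant: in row `n`, each `m > n` occurs exactly at position `pos n m`. -/
def RowInv (n : ℕ) : Prop := ∀ m i, n < m → (A n i = m ↔ i = pos n m)

lemma rowInv_zero : RowInv 0 := by
  intro m i hm
  have h1 : m + 2 ≤ B (m + 1) := by
    have := (B_key (k := 1) (m := m) le_rfl).mpr (by rw [B_one]; omega)
    omega
  have hpos : pos 0 m = m := by unfold pos; omega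
  rw [A_zero, hpos]

lemma rowInv_succ (n : ℕ) (ih : RowInv n) : RowInv (n + 1) := by
  have eB : B (n + 1 + 1) = B (n + 2) := rfl
  have f1 : n + 3 ≤ B (n + 2) := by
    have := (B_key (k := 1) (m := n + 1) le_rfl).mpr (by rw [B_one]; omega)
    omega
  have f2 : B (n + 2) ≤ 2 * n + 3 := by
    by_contra hcon
    have := (B_key (k := n + 2) (m := n + 1) (by omega)).mp (by omega)
    omega
  have hPval : pos n (n + 1) = B (n + 2) - n - 2 := by
    unfold pos; omega
  have hset : {i | A n i = n + 1} = {B (n + 2) - n - 2} := by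
    ext i
    have := ih (n + 1) i (by omega)
    simp only [Set.mem_setOf_eq, Set.mem_singleton_iff]
    rw [this, hPval]
  have hInf : sInf {i | A n i = n + 1} = B (n + 2) - n - 2 := by
    rw [hset, csInf_singleton]
  intro m i hm
  have f3 : B (n + 2) < B (m + 1) := B_mono (by omega)
  have f4 : m + 1 + (n + 2) ≤ B (m + 1) ↔ B (n + 2) ≤ m := B_key (by omega)
  have hA := A_succ n i
  rw [hInf] at hA
  rw [hA]
  by_cases h5 : B (n + 2) ≤ m
  · -- case A : m is already fixed; pos n m = pos (n+1) m = m
    have hcm : m + n + 3 ≤ B (m + 1) := by omega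
    have hR : pos n m = m := by unfold pos; omega
    have hQ : pos (n + 1) m = m := by unfold pos; omega
    rw [hQ]
    split_ifs with h₁ h₂ h₃
    · rw [ih m i (by omega), hR]
    · rw [ih m (i + 1) (by omega), hR]; omega
    · omega
    · rw [ih m i (by omega), hR]
  · -- case B : m gets shifted one place to the left
    have hcm : B (m + 1) ≤ m + n + 2 := by omega
    have hR : pos n m = B (m + 1) - n - 2 := by unfold pos; omega
    have hQ : pos (n + 1) m = B (m + 1) - n - 3 := by unfold pos; omega
    rw [hQ]
    split_ifs with h₁ h₂ h₃
    · rw [ih m i (by omega), hR]; omega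
    · rw [ih m (i + 1) (by omega), hR]; omega
    · omega
    · rw [ih m i (by omega), hR]; omega

lemma rowInv_all (n : ℕ) : RowInv n := by
  induction n with
  | zero => exact rowInv_zero
  | succ n ih => exact rowInv_succ n ih

lemma B_cast (n : ℕ) : ⌊((n : ℝ) + 1) * phi⌋₊ = B (n + 1) := by
  unfold B
  push_cast
  ring_nf

theorem final_fixed_segment (n : ℕ) (hn : 1 ≤ n) :
    (∀ i, ⌊((n : ℝ) + 1) * phi⌋₊ ≤ i → A n i = i) ∧
      A n (⌊((n : ℝ) + 1) * phi⌋₊ - 1) ≠ ⌊((n : ℝ) + 1) * phi⌋₊ - 1 := by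
  rw [B_cast]
  obtain ⟨n', rfl⟩ : ∃ n', n = n' + 1 := ⟨n - 1, by omega⟩
  have eB : B (n' + 1 + 1) = B (n' + 2) := rfl
  rw [eB]
  have f1 : n' + 3 ≤ B (n' + 2) := by
    have := (B_key (k := 1) (m := n' + 1) le_rfl).mpr (by rw [B_one]; omega)
    omega
  have f2 : B (n' + 2) ≤ 2 * n' + 3 := by
    by_contra hcon
    have := (B_key (k := n' + 2) (m := n' + 1) (by omega)).mp (by omega)
    omega
  constructor
  · intro i hi
    have hni : n' + 1 < i := by omega
    have hik : i + 1 + (n' + 2) ≤ B (i + 1) :=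
      (B_key (k := n' + 2) (m := i) (by omega)).mpr hi
    have hpos : pos (n' + 1) i = i := by unfold pos; omega
    exact (rowInv_all (n' + 1) i i hni).mpr hpos.symm
  · -- the entry at position B(n+1) - 1 is n itself
    have hPval : pos n' (n' + 1) = B (n' + 2) - n' - 2 := by unfold pos; omega
    have hset : {i | A n' i = n' + 1} = {B (n' + 2) - n' - 2} := by
      ext i
      have := rowInv_all n' (n' + 1) i (by omega)
      simp only [Set.mem_setOf_eq, Set.mem_singleton_iff]
      rw [this, hPval]
    have hInf : sInf {i | A n' i = n' + 1} = B (n' + 2) - n' - 2 := by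
      rw [hset, csInf_singleton]
    have hA := A_succ n' (B (n' + 2) - 1)
    rw [hInf] at hA
    have hval : A (n' + 1) (B (n' + 2) - 1) = n' + 1 := by
      rw [hA]
      split_ifs with h₁ h₂ h₃
      · exact absurd h₁ (by omega)
      · exact absurd h₂ (by omega)
      · rfl
      · exact (h₃ (by omega)).elim
    rw [hval]
    omega
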